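/- arXiv:1605.08636 — 2 statements merged into one kernel-verified Lean document; each statement's English description precedes it below -/
import Mathlib

section
/- Consider linear predictors f_w(x) = w·x with w ∼ N(0, σ_π² I_d), inputs x ∼ N(0, σ_x² I_d), labels y = w*·x + ε with ε ∼ N(0, σ_ε²), and the squared loss ℓ(w,x,y) = (w·x − y)². Then the random variable V = E_{x,y}[ℓ(w,x,y)] − ℓ(w,x,y) is sub-gamma with scale c = 2σ_x²σ_π² and, at λ = 1, variance factor s² = 2[σ_x²(σ_π²d + ‖w*‖²) + σ_ε²(1−c)]; that is, ln E[exp(V)] ≤ s²/(2(1−c)) provided c < 1. -/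
/-!
Since `ℓ ≥ 0`, the variable `V` is at most `E_{x,y} ℓ(w, ·) = σ_x² ‖w - w*‖² + σ_ε²`, so `E[exp V]`
is at most `exp σ_ε²` times the moment generating function of `‖w - w*‖²` at `σ_x²`. Under the
product prior this factorises over the coordinates; each factor is a Gaussian integral, equal to
`exp (σ_x² w*ᵢ² / (1 - c)) / √(1 - c)`. Taking logarithms, the bound follows from
`-log (1 - c) ≤ c / (1 - c)`.
-/

open MeasureTheory ProbabilityTheory Real
open scoped NNReal ENNReal

section SecondMoments

variable {ι : Type*} [Fintype ι] {μ : ι → Measure ℝ} [∀ i, IsProbabilityMeasure (μ i)]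

lemma memLp_eval_pi {p : ℝ≥0∞} (hμ : ∀ i, MemLp id p (μ i)) (i : ι) :
    MemLp (fun x : ι → ℝ => x i) p (Measure.pi μ) :=
  (hμ i).comp_measurePreserving (measurePreserving_eval μ i)

lemma memLp_sum_mul_pi (hμ : ∀ i, MemLp id 2 (μ i)) (u : ι → ℝ) :
    MemLp (fun x : ι → ℝ => ∑ i, u i * x i) 2 (Measure.pi μ) :=
  memLp_finsetSum _ fun i _ => (memLp_eval_pi hμ i).const_mul (u i)

lemma integral_sum_mul_pi (hμ : ∀ i, MemLp id 1 (μ i)) (u : ι → ℝ) :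
    ∫ x : ι → ℝ, ∑ i, u i * x i ∂(Measure.pi μ) = ∑ i, u i * ∫ y, y ∂(μ i) := by
  rw [integral_finsetSum _ fun i _ => ((memLp_eval_pi hμ i).integrable le_rfl).const_mul (u i)]
  refine Finset.sum_congr rfl fun i _ => ?_
  rw [integral_const_mul, integral_comp_eval (μ := μ) (f := fun y : ℝ => y) aestronglyMeasurable_id]

lemma variance_sum_mul_pi (hμ : ∀ i, MemLp id 2 (μ i)) (u : ι → ℝ) :
    Var[fun x : ι → ℝ => ∑ i, u i * x i; Measure.pi μ] = ∑ i, u i ^ 2 * Var[id; μ i] := by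
  have hindep : iIndepFun (fun i (x : ι → ℝ) => u i * x i) (Measure.pi μ) :=
    iIndepFun_pi (X := fun i y => u i * y) fun i => by fun_prop
  have hvar := IndepFun.variance_sum (s := Finset.univ)
    (fun i _ => (memLp_eval_pi hμ i).const_mul (u i))
    (fun i _ j _ hij => hindep.indepFun hij)
  simp only [Finset.sum_fn] at hvar
  rw [hvar]
  refine Finset.sum_congr rfl fun i _ => ?_
  rw [variance_const_mul]
  exact congrArg _ ((measurePreserving_eval μ i).variance_fun_comp (f := id) aemeasurable_id)

lemma variance_sub_prod {α β : Type*} [MeasurableSpace α] [MeasurableSpace β]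
    {P : Measure α} {Q : Measure β} [IsProbabilityMeasure P] [IsProbabilityMeasure Q]
    {f : α → ℝ} {g : β → ℝ} (hf : MemLp f 2 P) (hg : MemLp g 2 Q) :
    Var[fun q : α × β => f q.1 - g q.2; P.prod Q] = Var[f; P] + Var[g; Q] := by
  have hf' : MemLp (fun q : α × β => f q.1) 2 (P.prod Q) :=
    hf.comp_measurePreserving measurePreserving_fst
  have hg' : MemLp (fun q : α × β => g q.2) 2 (P.prod Q) :=
    hg.comp_measurePreserving measurePreserving_snd
  rw [variance_fun_sub hf' hg',
    (indepFun_prod₀ hf.aemeasurable hg.aemeasurable).covariance_eq_zero hf' hg',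
    measurePreserving_fst.variance_fun_comp hf.aemeasurable,
    measurePreserving_snd.variance_fun_comp hg.aemeasurable]
  ring

lemma integral_sq_sum_mul_sub_prod {η : Measure ℝ} [IsProbabilityMeasure η]
    (hμ : ∀ i, MemLp id 2 (μ i)) (hμ0 : ∀ i, ∫ y, y ∂(μ i) = 0)
    (hη : MemLp id 2 η) (hη0 : ∫ e, e ∂η = 0) (u : ι → ℝ) :
    ∫ q : (ι → ℝ) × ℝ, (∑ i, u i * q.1 i - q.2) ^ 2 ∂((Measure.pi μ).prod η)
      = ∑ i, u i ^ 2 * Var[id; μ i] + Var[id; η] := by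
  have hA := memLp_sum_mul_pi hμ u
  have hη' : MemLp (fun e : ℝ => e) 2 η := hη
  have hmean : ∫ q : (ι → ℝ) × ℝ, (∑ i, u i * q.1 i - q.2) ∂((Measure.pi μ).prod η) = 0 := by
    rw [integral_sub ((hA.integrable one_le_two).comp_fst η)
        ((hη'.integrable one_le_two).comp_snd (Measure.pi μ)),
      integral_fun_fst (f := fun x : ι → ℝ => ∑ i, u i * x i), integral_fun_snd (f := fun e => e),
      integral_sum_mul_pi (fun i => (hμ i).mono_exponent one_le_two), hη0]
    simp [hμ0]
  rw [← variance_of_integral_eq_zero (by fun_prop) hmean, variance_sub_prod hA hη',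
    variance_sum_mul_pi hμ]
  rfl

end SecondMoments

lemma integral_sq_sum_mul_sub_sum_mul_add_gaussianReal {ι : Type*} [Fintype ι] (v s : ℝ≥0)
    (w w' : ι → ℝ) :
    ∫ q : (ι → ℝ) × ℝ, ((∑ i, w i * q.1 i) - ((∑ i, w' i * q.1 i) + q.2)) ^ 2
        ∂((Measure.pi fun _ => gaussianReal 0 v).prod (gaussianReal 0 s))
      = v * ∑ i, (w i - w' i) ^ 2 + s := by
  have hres : ∀ q : (ι → ℝ) × ℝ, (∑ i, w i * q.1 i) - ((∑ i, w' i * q.1 i) + q.2)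
      = ∑ i, (w i - w' i) * q.1 i - q.2 := by
    intro q
    simp only [sub_mul, Finset.sum_sub_distrib]
    ring
  simp_rw [hres]
  rw [integral_sq_sum_mul_sub_prod (fun _ => memLp_id_gaussianReal' 2 (by simp))
    (fun _ => integral_id_gaussianReal) (memLp_id_gaussianReal' 2 (by simp))
    integral_id_gaussianReal]
  simp only [variance_id_gaussianReal, Finset.mul_sum, mul_comm]

section GaussianExpSq

variable {m t : ℝ} {v : ℝ≥0}

/- Completing the square in the exponent: the tilted Gaussian density is again Gaussian. -/
lemma exp_mul_sq_sub_mul_gaussianPDFReal (hv : v ≠ 0) (ht : 2 * t * v < 1) (a y : ℝ) :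
    exp (t * (y - a) ^ 2) * gaussianPDFReal m v y
      = exp (t * (m - a) ^ 2 / (1 - 2 * t * v)) / √(1 - 2 * t * v)
        * gaussianPDFReal (a + (m - a) / (1 - 2 * t * v)) (v / (1 - 2 * t * v).toNNReal) y := by
  set D := 1 - 2 * t * v with hD_def
  have hD : 0 < D := by linarith
  have hv0 : (0 : ℝ) < v := by positivity
  have hv' : ((v / D.toNNReal : ℝ≥0) : ℝ) = v / D := by
    rw [NNReal.coe_div, Real.coe_toNNReal _ hD.le]
  have hexp : t * (y - a) ^ 2 + -(y - m) ^ 2 / (2 * v)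
      = t * (m - a) ^ 2 / D + -(y - (a + (m - a) / D)) ^ 2 / (2 * (v / D)) := by
    field_simp
    rw [hD_def]
    ring
  have hsD : 0 < √D := by positivity
  simp only [gaussianPDFReal, hv']
  rw [show 2 * π * (v / D) = 2 * π * v / D by ring, Real.sqrt_div' _ hD.le]
  calc exp (t * (y - a) ^ 2) * ((√(2 * π * v))⁻¹ * exp (-(y - m) ^ 2 / (2 * v)))
      = (√(2 * π * v))⁻¹ * exp (t * (y - a) ^ 2 + -(y - m) ^ 2 / (2 * v)) := by
        rw [exp_add]; ring
    _ = _ := by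
        rw [hexp, exp_add]
        field_simp

lemma integrable_exp_mul_sq_sub_gaussianReal (hv : v ≠ 0) (ht : 2 * t * v < 1) (a : ℝ) :
    Integrable (fun y => exp (t * (y - a) ^ 2)) (gaussianReal m v) := by
  rw [gaussianReal_of_var_ne_zero _ hv, integrable_withDensity_iff_integrable_smul'
    (measurable_gaussianPDF m v) (ae_of_all _ fun _ => gaussianPDF_lt_top)]
  simp_rw [toReal_gaussianPDF, smul_eq_mul, mul_comm (gaussianPDFReal m v _),
    exp_mul_sq_sub_mul_gaussianPDFReal hv ht a]
  exact (integrable_gaussianPDFReal _ _).const_mul _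

lemma integral_exp_mul_sq_sub_gaussianReal (hv : v ≠ 0) (ht : 2 * t * v < 1) (a : ℝ) :
    ∫ y, exp (t * (y - a) ^ 2) ∂(gaussianReal m v)
      = exp (t * (m - a) ^ 2 / (1 - 2 * t * v)) / √(1 - 2 * t * v) := by
  have hv' : v / (1 - 2 * t * v).toNNReal ≠ 0 :=
    div_ne_zero hv (by simpa using ht)
  simp_rw [integral_gaussianReal_eq_integral_smul hv, smul_eq_mul,
    mul_comm (gaussianPDFReal m v _), exp_mul_sq_sub_mul_gaussianPDFReal hv ht a,
    integral_const_mul, integral_gaussianPDFReal_eq_one _ hv', mul_one]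

variable {ι : Type*} [Fintype ι]

lemma integrable_exp_mul_sum_sq_sub_pi (hv : v ≠ 0) (ht : 2 * t * v < 1) (a : ι → ℝ) :
    Integrable (fun w : ι → ℝ => exp (t * ∑ i, (w i - a i) ^ 2))
      (Measure.pi fun _ => gaussianReal m v) := by
  simp_rw [Finset.mul_sum, exp_sum]
  exact Integrable.fintype_prod (f := fun i y => exp (t * (y - a i) ^ 2))
    fun i => integrable_exp_mul_sq_sub_gaussianReal hv ht (a i)

lemma integral_exp_mul_sum_sq_sub_pi (hv : v ≠ 0) (ht : 2 * t * v < 1) (a : ι → ℝ) :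
    ∫ w : ι → ℝ, exp (t * ∑ i, (w i - a i) ^ 2) ∂(Measure.pi fun _ => gaussianReal m v)
      = exp (t * ∑ i, (m - a i) ^ 2 / (1 - 2 * t * v))
        / √(1 - 2 * t * v) ^ Fintype.card ι := by
  simp_rw [Finset.mul_sum, exp_sum]
  rw [integral_fintype_prod_eq_prod (fun i y => exp (t * (y - a i) ^ 2))]
  simp_rw [integral_exp_mul_sq_sub_gaussianReal hv ht, Finset.prod_div_distrib,
    Finset.prod_const, Finset.card_univ, mul_div_assoc]

lemma log_integral_exp_mul_sum_sq_sub_add_pi (hv : v ≠ 0) (ht : 2 * t * v < 1) (a : ι → ℝ)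
    (s : ℝ) :
    log (∫ w : ι → ℝ, exp (t * ∑ i, (w i - a i) ^ 2 + s) ∂(Measure.pi fun _ => gaussianReal m v))
      = t * ∑ i, (m - a i) ^ 2 / (1 - 2 * t * v) + Fintype.card ι * -log √(1 - 2 * t * v)
        + s := by
  have hD : 0 < √(1 - 2 * t * v) := sqrt_pos.mpr (by linarith)
  simp_rw [exp_add, integral_mul_const, integral_exp_mul_sum_sq_sub_pi hv ht]
  rw [log_mul (by positivity) (by positivity), log_div (by positivity) (by positivity),
    log_exp, log_exp, log_pow]
  ring

end GaussianExpSq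

lemma log_integral_exp_le_of_le {α : Type*} [MeasurableSpace α] {μ : Measure α} [NeZero μ]
    {f g : α → ℝ} (hf : AEStronglyMeasurable f μ) (hg : Integrable (fun x => exp (g x)) μ)
    (hfg : ∀ x, f x ≤ g x) :
    log (∫ x, exp (f x) ∂μ) ≤ log (∫ x, exp (g x) ∂μ) := by
  have hf' : Integrable (fun x => exp (f x)) μ :=
    hg.mono' (continuous_exp.comp_aestronglyMeasurable hf) (ae_of_all _ fun x => by
      rw [Real.norm_eq_abs, abs_of_pos (exp_pos _)]
      exact exp_le_exp.mpr (hfg x))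
  exact log_le_log (integral_exp_pos hf') (integral_mono hf' hg fun x => exp_le_exp.mpr (hfg x))

lemma neg_log_sqrt_one_sub_le {c : ℝ} (hc : c < 1) : -log √(1 - c) ≤ c / (2 * (1 - c)) := by
  have hD : 0 < 1 - c := by linarith
  have h := one_sub_inv_le_log_of_pos hD
  rw [log_sqrt hD.le]
  have h1 : 1 - (1 - c)⁻¹ = -(2 * (c / (2 * (1 - c)))) := by field_simp; ring
  linarith

theorem stmt_10_general (d : ℕ) (σx σπ σε : ℝ)
    (hσπ : 0 < σπ)
    (wstar : Fin d → ℝ)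
    (prior : Measure (Fin d → ℝ))
    (hprior : prior = Measure.pi fun _ : Fin d => gaussianReal 0 (Real.toNNReal (σπ ^ 2)))
    (ν : Measure ((Fin d → ℝ) × ℝ))
    (hν : ν = (Measure.pi fun _ : Fin d => gaussianReal 0 (Real.toNNReal (σx ^ 2))).prod
      (gaussianReal 0 (Real.toNNReal (σε ^ 2))))
    (ℓ : (Fin d → ℝ) → (Fin d → ℝ) × ℝ → ℝ)
    (hℓ : ∀ w q, ℓ w q = ((∑ i, w i * q.1 i) - ((∑ i, wstar i * q.1 i) + q.2)) ^ 2)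
    (c s2 : ℝ)
    (hc : c = 2 * σx ^ 2 * σπ ^ 2) (hc1 : c < 1)
    (hs2 : s2 = 2 * (σx ^ 2 * (σπ ^ 2 * d + ∑ i, (wstar i) ^ 2) + σε ^ 2 * (1 - c))) :
    Real.log (∫ p : (Fin d → ℝ) × ((Fin d → ℝ) × ℝ),
        Real.exp ((∫ q, ℓ p.1 q ∂ν) - ℓ p.1 p.2) ∂(prior.prod ν))
      ≤ s2 / (2 * (1 - c)) := by
  subst hprior hν hs2
  have hvπ : (σπ ^ 2).toNNReal ≠ 0 := by simpa using hσπ.ne'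
  have ht : 2 * σx ^ 2 * ((σπ ^ 2).toNNReal : ℝ) < 1 := by
    rwa [Real.coe_toNNReal _ (sq_nonneg _), ← hc]
  have hloss : ∀ w, ∫ q, ℓ w q ∂((Measure.pi fun _ => gaussianReal 0 (σx ^ 2).toNNReal).prod
      (gaussianReal 0 (σε ^ 2).toNNReal)) = σx ^ 2 * ∑ i, (w i - wstar i) ^ 2 + σε ^ 2 := by
    intro w
    simp_rw [hℓ, integral_sq_sum_mul_sub_sum_mul_add_gaussianReal,
      Real.coe_toNNReal _ (sq_nonneg _)]
  have hint : Integrable (fun w : Fin d → ℝ => exp (σx ^ 2 * ∑ i, (w i - wstar i) ^ 2 + σε ^ 2))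
      (Measure.pi fun _ => gaussianReal 0 (σπ ^ 2).toNNReal) := by
    simpa only [exp_add] using (integrable_exp_mul_sum_sq_sub_pi hvπ ht wstar).mul_const _
  calc _ ≤ log (∫ p : (Fin d → ℝ) × ((Fin d → ℝ) × ℝ),
          exp (σx ^ 2 * ∑ i, (p.1 i - wstar i) ^ 2 + σε ^ 2) ∂(_ : Measure _).prod _) := by
        refine log_integral_exp_le_of_le ?_ (hint.comp_fst _) fun p => ?_
        · simp_rw [hloss, hℓ]
          exact Continuous.aestronglyMeasurable (by fun_prop)
        · rw [hloss, sub_le_self_iff, hℓ]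
          positivity
    _ = σx ^ 2 * ∑ i, (0 - wstar i) ^ 2 / (1 - c) + d * -log √(1 - c) + σε ^ 2 := by
        rw [integral_fun_fst (f := fun w : Fin d → ℝ => exp (σx ^ 2 * ∑ i, (w i - wstar i) ^ 2
          + σε ^ 2)), probReal_univ, one_smul, log_integral_exp_mul_sum_sq_sub_add_pi hvπ ht,
          Real.coe_toNNReal _ (sq_nonneg _), ← hc, Fintype.card_fin]
    _ ≤ σx ^ 2 * ∑ i, (0 - wstar i) ^ 2 / (1 - c) + d * (c / (2 * (1 - c))) + σε ^ 2 := by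
        gcongr
        exact neg_log_sqrt_one_sub_le hc1
    _ = _ := by
        have : 1 - c ≠ 0 := by linarith
        simp only [zero_sub, neg_sq, ← Finset.sum_div]
        field_simp
        rw [hc]
        ring

/-- The centered squared loss of a random linear predictor with Gaussian prior,
Gaussian inputs and Gaussian label noise is sub-gamma: at `λ = 1`, with
`c = 2σ_x²σ_π² < 1` and `s² = 2[σ_x²(σ_π²d + ‖w*‖²) + σ_ε²(1-c)]`,
`ln E[exp V] ≤ s²/(2(1-c))` where `V = E_{x,y}[ℓ(w,x,y)] - ℓ(w,x,y)`. -/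
theorem stmt_10 (d : ℕ) (hd : 0 < d) (σx σπ σε : ℝ)
    (hσx : 0 < σx) (hσπ : 0 < σπ) (hσε : 0 < σε)
    (wstar : Fin d → ℝ)
    (prior : Measure (Fin d → ℝ))
    (hprior : prior = Measure.pi fun _ : Fin d => gaussianReal 0 (Real.toNNReal (σπ ^ 2)))
    (ν : Measure ((Fin d → ℝ) × ℝ))
    (hν : ν = (Measure.pi fun _ : Fin d => gaussianReal 0 (Real.toNNReal (σx ^ 2))).prod
      (gaussianReal 0 (Real.toNNReal (σε ^ 2))))
    (ℓ : (Fin d → ℝ) → (Fin d → ℝ) × ℝ → ℝ)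
    (hℓ : ∀ w q, ℓ w q = ((∑ i, w i * q.1 i) - ((∑ i, wstar i * q.1 i) + q.2)) ^ 2)
    (c s2 : ℝ)
    (hc : c = 2 * σx ^ 2 * σπ ^ 2) (hc1 : c < 1)
    (hs2 : s2 = 2 * (σx ^ 2 * (σπ ^ 2 * d + ∑ i, (wstar i) ^ 2) + σε ^ 2 * (1 - c))) :
    Real.log (∫ p : (Fin d → ℝ) × ((Fin d → ℝ) × ℝ),
        Real.exp ((∫ q, ℓ p.1 q ∂ν) - ℓ p.1 p.2) ∂(prior.prod ν))
      ≤ s2 / (2 * (1 - c)) :=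
  stmt_10_general d σx σπ σε hσπ wstar prior hprior ν hν ℓ hℓ c s2 hc hc1 hs2
end

section
/- In Bayesian linear regression with Gaussian likelihood p(y|x,w) = N(y | w·φ(x), σ²) and prior N(0, σ_π² I), the negative log marginal likelihood decomposes as −ln p(Y|X) = n·E_{w∼ρ*}[L̂_nll(w)] + KL(N(ŵ, A⁻¹) ‖ N(0, σ_π² I)), where ρ* = N(ŵ, A⁻¹) is the Bayesian posterior with A = (1/σ²)ΦᵀΦ + (1/σ_π²)I and ŵ = (1/σ²)A⁻¹Φᵀy, and L̂_nll(w) = (1/(2n))·[n·ln(2πσ²) + (1/σ²)‖y − Φw‖²]. -/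
open MeasureTheory Matrix Real

/-!
Completing the square: since `A ŵ = Φᵀ y / σ²`, for every `w`
`‖y - Φ w‖² / σ² + ‖w‖² / σπ² = (w - ŵ)ᵀ A (w - ŵ) + ‖y - Φ ŵ‖² / σ² + ‖ŵ‖² / σπ²`.
Taking logarithms of the two Gaussian densities, `n L̂(w) + log (p w / q w)` is therefore the
constant `-log p(Y | X)`, and integrating it against the probability density `p` gives the claim.
The substitution `w = ŵ + M u` with `Mᵀ A M = 1` reduces the normalisation of `p` and the
finiteness of its second moments to the standard Gaussian on `ℝᵈ`.
-/

section StandardGaussian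

variable {ι : Type*} [Fintype ι]

theorem exp_neg_half_dotProduct_self_eq_prod (u : ι → ℝ) :
    exp (-(1 / 2) * (u ⬝ᵥ u)) = ∏ i, exp (-(1 / 2) * u i ^ 2) := by
  rw [← exp_sum, dotProduct, Finset.mul_sum]
  simp_rw [sq]

theorem integrable_exp_neg_half_dotProduct_self_mul_prod_pow (k : ι → ℕ) :
    Integrable fun u : ι → ℝ => exp (-(1 / 2) * (u ⬝ᵥ u)) * ∏ i, u i ^ k i := by
  simp_rw [exp_neg_half_dotProduct_self_eq_prod, ← Finset.prod_mul_distrib]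
  refine Integrable.fintype_prod (f := fun i x => exp (-(1 / 2) * x ^ 2) * x ^ k i) fun i => ?_
  simpa [mul_comm, Real.rpow_natCast] using
    integrable_rpow_mul_exp_neg_mul_sq (b := 1 / 2) (by norm_num) (s := k i)
      (by linarith [(k i).cast_nonneg (α := ℝ)])

theorem integrable_exp_neg_half_dotProduct_self_mul_eval (P : MvPolynomial ι ℝ) :
    Integrable fun u : ι → ℝ => exp (-(1 / 2) * (u ⬝ᵥ u)) * MvPolynomial.eval u P := by
  simp_rw [MvPolynomial.eval_eq', Finset.mul_sum]
  refine integrable_finsetSum _ fun k _ => ?_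
  simpa [mul_left_comm] using
    (integrable_exp_neg_half_dotProduct_self_mul_prod_pow (fun i => k i)).const_mul (P.coeff k)

theorem integrable_exp_neg_half_dotProduct_self :
    Integrable fun u : ι → ℝ => exp (-(1 / 2) * (u ⬝ᵥ u)) := by
  simpa using integrable_exp_neg_half_dotProduct_self_mul_eval (ι := ι) 1

theorem integral_exp_neg_half_dotProduct_self :
    ∫ u : ι → ℝ, exp (-(1 / 2) * (u ⬝ᵥ u)) = (2 * π) ^ ((Fintype.card ι : ℝ) / 2) := by
  simp_rw [exp_neg_half_dotProduct_self_eq_prod]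
  rw [volume_pi, integral_fintype_prod_eq_pow (fun x : ℝ => exp (-(1 / 2) * x ^ 2)),
    integral_gaussian, show π / (1 / 2) = 2 * π by ring, sqrt_eq_rpow, ← rpow_natCast,
    ← rpow_mul (by positivity)]
  ring_nf

theorem integrable_exp_neg_half_dotProduct_self_mul_sub_mulVec_dotProduct_self {κ : Type*}
    [Fintype κ] (N : Matrix κ ι ℝ) (r : κ → ℝ) :
    Integrable fun u : ι → ℝ =>
      exp (-(1 / 2) * (u ⬝ᵥ u)) * ((r - N *ᵥ u) ⬝ᵥ (r - N *ᵥ u)) := by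
  classical
  let P : MvPolynomial ι ℝ :=
    ∑ k, (MvPolynomial.C (r k) - ∑ i, MvPolynomial.C (N k i) * MvPolynomial.X i) ^ 2
  convert integrable_exp_neg_half_dotProduct_self_mul_eval P using 3 with u
  simp [P, dotProduct, mulVec, sq]

end StandardGaussian

section AffineChangeOfVariables

variable {ι E : Type*} [Fintype ι] [DecidableEq ι] [NormedAddCommGroup E] {M : Matrix ι ι ℝ}

theorem measurableEmbedding_add_mulVec (hM : M.det ≠ 0) (c : ι → ℝ) :
    MeasurableEmbedding fun u => c + M *ᵥ u := by
  let L := (LinearMap.equivOfDetNeZero (toLin' M)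
    (by rwa [LinearMap.det_toLin'])).toContinuousLinearEquiv
  exact (L.toHomeomorph.trans (Homeomorph.addLeft c)).measurableEmbedding

theorem map_add_mulVec_volume (hM : M.det ≠ 0) (c : ι → ℝ) :
    Measure.map (fun u => c + M *ᵥ u) volume = ENNReal.ofReal |M.det⁻¹| • volume := by
  have : (fun u => c + M *ᵥ u) = (c + ·) ∘ toLin' M := by
    funext u; simp
  rw [this, ← Measure.map_map (measurable_const_add c)
    (toLin' M).continuous_of_finiteDimensional.measurable,
    Real.map_matrix_volume_pi_eq_smul_volume_pi hM, Measure.map_smul, map_add_left_eq_self]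

theorem integral_comp_add_mulVec [NormedSpace ℝ E] (hM : M.det ≠ 0) (c : ι → ℝ)
    (f : (ι → ℝ) → E) :
    ∫ u, f (c + M *ᵥ u) = |M.det|⁻¹ • ∫ w, f w := by
  rw [← (measurableEmbedding_add_mulVec hM c).integral_map, map_add_mulVec_volume hM,
    integral_smul_measure, ENNReal.toReal_ofReal (abs_nonneg _), abs_inv]

theorem integrable_comp_add_mulVec_iff (hM : M.det ≠ 0) (c : ι → ℝ) (f : (ι → ℝ) → E) :
    Integrable (fun u => f (c + M *ᵥ u)) ↔ Integrable f := by
  rw [← Function.comp_def, ← (measurableEmbedding_add_mulVec hM c).integrable_map_iff,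
    map_add_mulVec_volume hM]
  exact integrable_smul_measure (by simpa using hM) ENNReal.ofReal_ne_top

end AffineChangeOfVariables

theorem Matrix.PosDef.exists_whitening {ι : Type*} [Fintype ι] [DecidableEq ι]
    {A : Matrix ι ι ℝ} (hA : A.PosDef) :
    ∃ M : Matrix ι ι ℝ, M.det ≠ 0 ∧ |M.det| = (√A.det)⁻¹ ∧
      ∀ u, M *ᵥ u ⬝ᵥ A *ᵥ (M *ᵥ u) = u ⬝ᵥ u := by
  obtain ⟨B, hB, rfl⟩ : ∃ B : Matrix ι ι ℝ, IsUnit B ∧ A = Bᵀ * B := by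
    open scoped MatrixOrder in
    simpa [star_eq_conjTranspose] using
      CStarAlgebra.isStrictlyPositive_iff_eq_star_mul_self.mp hA.isStrictlyPositive
  have hBdet : IsUnit B.det := (isUnit_iff_isUnit_det B).mp hB
  refine ⟨B⁻¹, by simpa [det_nonsing_inv] using hBdet.ne_zero, ?_, fun u => ?_⟩
  · rw [det_nonsing_inv, Ring.inverse_eq_inv', det_mul, det_transpose, abs_inv,
      sqrt_mul_self_eq_abs]
  · rw [← mulVec_mulVec, dotProduct_mulVec, vecMul_transpose, mulVec_mulVec,
      mul_nonsing_inv _ hBdet, one_mulVec]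

section PrecisionGaussian

variable {ι : Type*} [Fintype ι] [DecidableEq ι] {A : Matrix ι ι ℝ}

noncomputable def precisionGaussianPDF (A : Matrix ι ι ℝ) (m w : ι → ℝ) : ℝ :=
  √A.det / (2 * π) ^ ((Fintype.card ι : ℝ) / 2) *
    exp (-(1 / 2) * ((w - m) ⬝ᵥ A *ᵥ (w - m)))

theorem precisionGaussianPDF_pos (hA : A.PosDef) (m w : ι → ℝ) :
    0 < precisionGaussianPDF A m w := by
  have := hA.det_pos
  unfold precisionGaussianPDF
  positivity

theorem log_precisionGaussianPDF (hA : A.PosDef) (m w : ι → ℝ) :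
    log (precisionGaussianPDF A m w) = (1 / 2) * log A.det
      - (Fintype.card ι / 2) * log (2 * π) - (1 / 2) * ((w - m) ⬝ᵥ A *ᵥ (w - m)) := by
  have := hA.det_pos
  rw [precisionGaussianPDF, log_mul (by positivity) (exp_ne_zero _), log_exp,
    log_div (by positivity) (by positivity), log_sqrt this.le, log_rpow (by positivity)]
  ring

theorem precisionGaussianPDF_add_mulVec {M : Matrix ι ι ℝ}
    (hM : ∀ u, M *ᵥ u ⬝ᵥ A *ᵥ (M *ᵥ u) = u ⬝ᵥ u) (m u : ι → ℝ) :
    precisionGaussianPDF A m (m + M *ᵥ u) =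
      √A.det / (2 * π) ^ ((Fintype.card ι : ℝ) / 2) * exp (-(1 / 2) * (u ⬝ᵥ u)) := by
  rw [precisionGaussianPDF, add_sub_cancel_left, hM]

theorem integral_precisionGaussianPDF (hA : A.PosDef) (m : ι → ℝ) :
    ∫ w, precisionGaussianPDF A m w = 1 := by
  obtain ⟨M, hMdet, hMabs, hM⟩ := hA.exists_whitening
  have hdet := hA.det_pos
  have h := integral_comp_add_mulVec hMdet m (precisionGaussianPDF A m)
  simp_rw [precisionGaussianPDF_add_mulVec hM, integral_const_mul,
    integral_exp_neg_half_dotProduct_self, hMabs, inv_inv, smul_eq_mul] at h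
  field_simp at h
  exact h.symm

theorem integrable_precisionGaussianPDF_mul_sub_mulVec_dotProduct_self (hA : A.PosDef)
    (m : ι → ℝ) {κ : Type*} [Fintype κ] (Φ : Matrix κ ι ℝ) (y : κ → ℝ) :
    Integrable fun w => precisionGaussianPDF A m w * ((y - Φ *ᵥ w) ⬝ᵥ (y - Φ *ᵥ w)) := by
  obtain ⟨M, hMdet, -, hM⟩ := hA.exists_whitening
  rw [← integrable_comp_add_mulVec_iff hMdet m]
  have hres : ∀ u, y - Φ *ᵥ (m + M *ᵥ u) = (y - Φ *ᵥ m) - (Φ * M) *ᵥ u := fun u => by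
    rw [mulVec_add, mulVec_mulVec, sub_add_eq_sub_sub]
  simp_rw [precisionGaussianPDF_add_mulVec hM, hres, mul_assoc]
  exact (integrable_exp_neg_half_dotProduct_self_mul_sub_mulVec_dotProduct_self _ _).const_mul _

theorem integrable_precisionGaussianPDF (hA : A.PosDef) (m : ι → ℝ) :
    Integrable (precisionGaussianPDF A m) := by
  obtain ⟨M, hMdet, -, hM⟩ := hA.exists_whitening
  rw [← integrable_comp_add_mulVec_iff hMdet m]
  simp_rw [precisionGaussianPDF_add_mulVec hM]
  exact integrable_exp_neg_half_dotProduct_self.const_mul _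

end PrecisionGaussian

theorem ridge_objective_eq_quadratic_add_min {R κ ι : Type*} [CommRing R] [Fintype κ] [Fintype ι]
    [DecidableEq ι]
    {α β : R} {Φ : Matrix κ ι R} {y : κ → R} {A : Matrix ι ι R} {ŵ : ι → R}
    (hA : A = α • (Φᵀ * Φ) + β • 1) (hŵ : A *ᵥ ŵ = α • Φᵀ *ᵥ y) (w : ι → R) :
    α * ((y - Φ *ᵥ w) ⬝ᵥ (y - Φ *ᵥ w)) + β * (w ⬝ᵥ w) =
      (w - ŵ) ⬝ᵥ A *ᵥ (w - ŵ) + α * ((y - Φ *ᵥ ŵ) ⬝ᵥ (y - Φ *ᵥ ŵ)) + β * (ŵ ⬝ᵥ ŵ) := by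
  have hquad : ∀ v, v ⬝ᵥ A *ᵥ v = α * (Φ *ᵥ v ⬝ᵥ Φ *ᵥ v) + β * (v ⬝ᵥ v) := fun v => by
    rw [hA, add_mulVec, smul_mulVec, smul_mulVec, one_mulVec, dotProduct_add, dotProduct_smul,
      dotProduct_smul, ← mulVec_mulVec, dotProduct_mulVec v Φᵀ, vecMul_transpose, smul_eq_mul,
      smul_eq_mul]
  have hcross : ∀ v, v ⬝ᵥ A *ᵥ ŵ = α * (y ⬝ᵥ Φ *ᵥ v) := fun v => by
    rw [hŵ, dotProduct_smul, smul_eq_mul, dotProduct_mulVec v Φᵀ, vecMul_transpose,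
      dotProduct_comm]
  have hsymm : ∀ v, ŵ ⬝ᵥ A *ᵥ v = v ⬝ᵥ A *ᵥ ŵ := fun v => by
    rw [dotProduct_mulVec, ← mulVec_transpose, dotProduct_comm,
      show Aᵀ = A by simp [hA, transpose_add, transpose_smul, transpose_mul]]
  have hexpand : ∀ a b : κ → R, (a - b) ⬝ᵥ (a - b) = a ⬝ᵥ a - 2 * (a ⬝ᵥ b) + b ⬝ᵥ b :=
    fun a b => by rw [dotProduct_sub, sub_dotProduct, sub_dotProduct, dotProduct_comm b a]; ring
  have hmin := (hquad ŵ).symm.trans (hcross ŵ)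
  rw [hexpand, hexpand, mulVec_sub, dotProduct_sub, sub_dotProduct, sub_dotProduct, hquad w,
    hsymm w, hcross w, hcross ŵ]
  linear_combination (-1 : R) * hmin

theorem log_isotropicGaussianDensity {s : ℝ} (hs : 0 < s) (k x : ℝ) :
    log ((2 * π * s ^ 2) ^ (-k / 2) * exp (-x / (2 * s ^ 2))) =
      -(k / 2) * log (2 * π) - k * log s - x / (2 * s ^ 2) := by
  rw [log_mul (by positivity) (exp_ne_zero _), log_exp, log_rpow (by positivity),
    log_mul (by positivity) (by positivity), log_pow]
  push_cast
  ring

theorem stmt_19_general (n d : ℕ) (hn : 0 < n)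
    (σ σπ : ℝ) (hσπ : 0 < σπ)
    (Φ : Matrix (Fin n) (Fin d) ℝ) (y : Fin n → ℝ)
    (A : Matrix (Fin d) (Fin d) ℝ)
    (hA : A = (1 / σ ^ 2) • (Φᵀ * Φ) + (1 / σπ ^ 2) • (1 : Matrix (Fin d) (Fin d) ℝ))
    (hApos : A.PosDef)
    (what : Fin d → ℝ)
    (hwhat : what = (1 / σ ^ 2) • A⁻¹.mulVec (Φᵀ.mulVec y))
    (Lhat : (Fin d → ℝ) → ℝ)
    (hLhat : ∀ w, Lhat w = (1 / (2 * n)) * (n * Real.log (2 * π * σ ^ 2)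
      + (1 / σ ^ 2) * ((y - Φ.mulVec w) ⬝ᵥ (y - Φ.mulVec w))))
    (p q : (Fin d → ℝ) → ℝ)
    (hp : ∀ w, p w = Real.sqrt A.det / (2 * π) ^ ((d : ℝ) / 2) *
      Real.exp (-(1 / 2) * ((w - what) ⬝ᵥ A.mulVec (w - what))))
    (hq : ∀ w, q w = (2 * π * σπ ^ 2) ^ (-(d : ℝ) / 2) *
      Real.exp (-(w ⬝ᵥ w) / (2 * σπ ^ 2))) :
    (1 / (2 * σ ^ 2)) * ((y - Φ.mulVec what) ⬝ᵥ (y - Φ.mulVec what))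
      + ((n : ℝ) / 2) * Real.log (2 * π * σ ^ 2)
      + (1 / (2 * σπ ^ 2)) * (what ⬝ᵥ what)
      + (1 / 2) * Real.log A.det + (d : ℝ) * Real.log σπ
    = (n : ℝ) * (∫ w : Fin d → ℝ, p w * Lhat w
        ∂(Measure.pi fun _ : Fin d => volume))
      + ∫ w : Fin d → ℝ, p w * Real.log (p w / q w)
          ∂(Measure.pi fun _ : Fin d => volume) := by
  rw [← volume_pi]
  obtain rfl : p = precisionGaussianPDF A what :=
    funext fun w => by rw [hp, precisionGaussianPDF, Fintype.card_fin]
  set p := precisionGaussianPDF A what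
  have hAw : A *ᵥ what = (1 / σ ^ 2) • Φᵀ *ᵥ y := by
    rw [hwhat, mulVec_smul, mulVec_mulVec, mul_nonsing_inv A hApos.det_pos.ne'.isUnit, one_mulVec]
  have hnL : ∀ w, n * Lhat w = (n / 2) * log (2 * π * σ ^ 2)
      + (1 / (2 * σ ^ 2)) * ((y - Φ *ᵥ w) ⬝ᵥ (y - Φ *ᵥ w)) := fun w => by
    rw [hLhat]
    field_simp
  have hpointwise : ∀ w, p w * log (p w / q w) =
      ((1 / (2 * σ ^ 2)) * ((y - Φ *ᵥ what) ⬝ᵥ (y - Φ *ᵥ what)) + (n / 2) * log (2 * π * σ ^ 2)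
        + (1 / (2 * σπ ^ 2)) * (what ⬝ᵥ what) + (1 / 2) * log A.det + d * log σπ) * p w
        - n * (p w * Lhat w) := fun w => by
    rw [log_div (precisionGaussianPDF_pos hApos what w).ne' (by rw [hq]; positivity),
      log_precisionGaussianPDF hApos, hq, log_isotropicGaussianDensity hσπ, Fintype.card_fin]
    linear_combination p w * ((1 / 2 : ℝ) * ridge_objective_eq_quadratic_add_min hA hAw w + hnL w)
  have hpL : Integrable fun w => p w * Lhat w := by
    refine (((integrable_precisionGaussianPDF hApos what).const_mul
      (1 / (2 * n) * (n * log (2 * π * σ ^ 2)))).add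
      ((integrable_precisionGaussianPDF_mul_sub_mulVec_dotProduct_self hApos what Φ y).const_mul
        (1 / (2 * n) * (1 / σ ^ 2)))).congr (ae_of_all _ fun w => ?_)
    simp only [Pi.add_apply, hLhat]
    ring
  simp_rw [hpointwise]
  rw [integral_sub ((integrable_precisionGaussianPDF hApos what).const_mul _) (hpL.const_mul _),
    integral_const_mul, integral_const_mul, integral_precisionGaussianPDF hApos, mul_one]
  ring

/-- In Bayesian linear regression, the negative log marginal likelihood
decomposes as `n·E_{w∼ρ*}[L̂_nll(w)] + KL(N(ŵ,A⁻¹) ‖ N(0,σ_π²I))`, where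
`ρ* = N(ŵ, A⁻¹)` is the Bayesian posterior. -/
theorem stmt_19 (n d : ℕ) (hn : 0 < n) (hd : 0 < d)
    (σ σπ : ℝ) (hσ : 0 < σ) (hσπ : 0 < σπ)
    (Φ : Matrix (Fin n) (Fin d) ℝ) (y : Fin n → ℝ)
    (A : Matrix (Fin d) (Fin d) ℝ)
    (hA : A = (1 / σ ^ 2) • (Φᵀ * Φ) + (1 / σπ ^ 2) • (1 : Matrix (Fin d) (Fin d) ℝ))
    (hApos : A.PosDef)
    (what : Fin d → ℝ)
    (hwhat : what = (1 / σ ^ 2) • A⁻¹.mulVec (Φᵀ.mulVec y))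
    (Lhat : (Fin d → ℝ) → ℝ)
    (hLhat : ∀ w, Lhat w = (1 / (2 * n)) * (n * Real.log (2 * π * σ ^ 2)
      + (1 / σ ^ 2) * ((y - Φ.mulVec w) ⬝ᵥ (y - Φ.mulVec w))))
    (p q : (Fin d → ℝ) → ℝ)
    (hp : ∀ w, p w = Real.sqrt A.det / (2 * π) ^ ((d : ℝ) / 2) *
      Real.exp (-(1 / 2) * ((w - what) ⬝ᵥ A.mulVec (w - what))))
    (hq : ∀ w, q w = (2 * π * σπ ^ 2) ^ (-(d : ℝ) / 2) *
      Real.exp (-(w ⬝ᵥ w) / (2 * σπ ^ 2))) :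
    (1 / (2 * σ ^ 2)) * ((y - Φ.mulVec what) ⬝ᵥ (y - Φ.mulVec what))
      + ((n : ℝ) / 2) * Real.log (2 * π * σ ^ 2)
      + (1 / (2 * σπ ^ 2)) * (what ⬝ᵥ what)
      + (1 / 2) * Real.log A.det + (d : ℝ) * Real.log σπ
    = (n : ℝ) * (∫ w : Fin d → ℝ, p w * Lhat w
        ∂(Measure.pi fun _ : Fin d => volume))
      + ∫ w : Fin d → ℝ, p w * Real.log (p w / q w)
          ∂(Measure.pi fun _ : Fin d => volume) :=
  stmt_19_general n d hn σ σπ hσπ Φ y A hA hApos what hwhat Lhat hLhat p q hp hq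
end
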